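/- If W_ξ(c) > 0, then c lies in the interior of S(ξ); in fact the cube c + (1/2)W_ξ(c)·[−1,1]^m is contained in S(ξ). -/
import Mathlib


/-- Trajectory of the discrete-time control system `x_{k+1} = F_k(x_k, u_k, ω_k)`, `x_0 = ξ`. -/
def traj {X U W : Type*} (F : ℕ → X → U → W → X) (ξ : X) (u : ℕ → U) (w : ℕ → W) : ℕ → X
  | 0 => ξ
  | k + 1 => F k (traj F ξ u w k) (u k) (w k)

/-- `u` is admissible for `(ξ, c)`: for every scenario, the mixed and end-point
constraints hold (componentwise, thresholds `c`). -/
def Adm {X U W : Type*} {m : ℕ} (N : ℕ) (F : ℕ → X → U → W → X) (Ω : ℕ → Set W)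
    (g : ℕ → X → U → Fin m → ℝ) (θ : X → Fin m → ℝ) (ξ : X) (c : Fin m → ℝ)
    (u : ℕ → U) : Prop :=
  ∀ w : ℕ → W, (∀ k, w k ∈ Ω k) →
    (∀ k ≤ N, c ≤ g k (traj F ξ u w k) (u k)) ∧ c ≤ θ (traj F ξ u w (N + 1))

/-- The set of robust sustainable thresholds `S(ξ)`. -/
def SST {X U W : Type*} {m : ℕ} (N : ℕ) (F : ℕ → X → U → W → X) (Ω : ℕ → Set W)
    (g : ℕ → X → U → Fin m → ℝ) (θ : X → Fin m → ℝ) (ξ : X) : Set (Fin m → ℝ) :=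
  {c | ∃ u : ℕ → U, Adm N F Ω g θ ξ c u}


/-- The level-set cost `J^c(u) = inf_w min{ min_{k≤N} Φ^c_k(x_k,u_k), Θ^c(x_{N+1}) }`,
where `Φ^c_k(x,u) = min_i (g^k_i(x,u) - c_i)` and `Θ^c(x) = min_i (θ_i(x) - c_i)`. -/
noncomputable def Jfun {X U W : Type*} {m : ℕ} [NeZero m] (N : ℕ)
    (F : ℕ → X → U → W → X) (Ω : ℕ → Set W)
    (g : ℕ → X → U → Fin m → ℝ) (θ : X → Fin m → ℝ) (ξ : X) (c : Fin m → ℝ)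
    (u : ℕ → U) : ℝ :=
  ⨅ w : {w : ℕ → W // ∀ k, w k ∈ Ω k},
    min ((Finset.Icc 0 N).inf' (Finset.nonempty_Icc.2 (Nat.zero_le N))
          fun k => ⨅ i, (g k (traj F ξ u w.1 k) (u k) i - c i))
        (⨅ i, (θ (traj F ξ u w.1 (N + 1)) i - c i))

/-- The level-set value `W_ξ(c) = max_u J^c(u)`. -/
noncomputable def Wval {X U W : Type*} {m : ℕ} [NeZero m] (N : ℕ)
    (F : ℕ → X → U → W → X) (Ω : ℕ → Set W)
    (g : ℕ → X → U → Fin m → ℝ) (θ : X → Fin m → ℝ) (ξ : X) (c : Fin m → ℝ) : ℝ :=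
  sSup (Set.range (Jfun N F Ω g θ ξ c))

theorem stmt14 {X U W : Type*} [NormedAddCommGroup X] [NormedSpace ℝ X]
    [FiniteDimensional ℝ X] [MetricSpace U] [CompactSpace U] [Nonempty U]
    {m N : ℕ} [NeZero m] (F : ℕ → X → U → W → X) (Ω : ℕ → Set W)
    (hΩ : ∀ k, (Ω k).Nonempty)
    (g : ℕ → X → U → Fin m → ℝ) (θ : X → Fin m → ℝ)
    (hF : ∀ k, ∀ ω ∈ Ω k, Continuous fun p : X × U => F k p.1 p.2 ω)
    (hg_usc : ∀ k i, UpperSemicontinuous fun p : X × U => g k p.1 p.2 i)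
    (hg_bdd : ∀ k i, BddBelow (Set.range fun p : X × U => g k p.1 p.2 i))
    (hθ_usc : ∀ i, UpperSemicontinuous fun x => θ x i)
    (hθ_bdd : ∀ i, BddBelow (Set.range fun x => θ x i))
    (ξ : X)
    (c : Fin m → ℝ) (hpos : 0 < Wval N F Ω g θ ξ c) :
    (∀ d : Fin m → ℝ, (∀ i, |d i - c i| ≤ Wval N F Ω g θ ξ c / 2) →
      d ∈ SST N F Ω g θ ξ) ∧
    c ∈ interior (SST N F Ω g θ ξ) := by
  classical
  set Wv := Wval N F Ω g θ ξ c with hWv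
  -- find a control whose cost exceeds Wv/2
  have hne : (Set.range (Jfun N F Ω g θ ξ c)).Nonempty := Set.range_nonempty _
  have hlt : Wv / 2 < sSup (Set.range (Jfun N F Ω g θ ξ c)) := by
    have : Wv / 2 < Wv := by linarith
    simpa [Wval, hWv] using this
  obtain ⟨_, ⟨u, rfl⟩, hu⟩ := exists_lt_of_lt_csSup hne hlt
  -- choose lower bounds for g and θ
  choose bg hbg using fun k i => hg_bdd k i
  choose bθ hbθ using hθ_bdd
  have hbg' : ∀ k (x : X) (v : U) i, bg k i ≤ g k x v i := fun k x v i =>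
    hbg k i (Set.mem_range_self (x, v))
  have hbθ' : ∀ (x : X) i, bθ i ≤ θ x i := fun x i => hbθ i (Set.mem_range_self x)
  have hIcc : (Finset.Icc 0 N).Nonempty := Finset.nonempty_Icc.2 (Nat.zero_le N)
  -- the function inside the outer infimum is bounded below
  set Φ : {w : ℕ → W // ∀ k, w k ∈ Ω k} → ℝ := fun w =>
    min ((Finset.Icc 0 N).inf' hIcc
          fun k => ⨅ i, (g k (traj F ξ u w.1 k) (u k) i - c i))
        (⨅ i, (θ (traj F ξ u w.1 (N + 1)) i - c i)) with hΦ
  have hbdd : BddBelow (Set.range Φ) := by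
    refine ⟨min ((Finset.Icc 0 N).inf' hIcc fun k => ⨅ i, (bg k i - c i))
      (⨅ i, (bθ i - c i)), ?_⟩
    rintro _ ⟨w, rfl⟩
    refine min_le_min ?_ ?_
    · refine Finset.le_inf' hIcc _ fun k hk => ?_
      refine (Finset.inf'_le _ hk).trans ?_
      exact ciInf_mono (Set.Finite.bddBelow (Set.finite_range _))
        (fun i => by have := hbg' k (traj F ξ u w.1 k) (u k) i; linarith)
    · exact ciInf_mono (Set.Finite.bddBelow (Set.finite_range _))
        (fun i => by have := hbθ' (traj F ξ u w.1 (N + 1)) i; linarith)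
  have hJ : Jfun N F Ω g θ ξ c u = ⨅ w, Φ w := rfl
  -- key pointwise estimate
  have key : ∀ w : ℕ → W, (∀ k, w k ∈ Ω k) →
      (∀ k ≤ N, ∀ i, c i + Wv / 2 < g k (traj F ξ u w k) (u k) i) ∧
      (∀ i, c i + Wv / 2 < θ (traj F ξ u w (N + 1)) i) := by
    intro w hw
    have h1 : Wv / 2 < Φ ⟨w, hw⟩ :=
      lt_of_lt_of_le (by simpa [hJ] using hu) (ciInf_le hbdd ⟨w, hw⟩)
    have hA := lt_of_lt_of_le h1 (min_le_left _ _)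
    have hB := lt_of_lt_of_le h1 (min_le_right _ _)
    constructor
    · intro k hk i
      have hk' : k ∈ Finset.Icc 0 N := Finset.mem_Icc.2 ⟨Nat.zero_le _, hk⟩
      have h2 : Wv / 2 < ⨅ i, (g k (traj F ξ u w k) (u k) i - c i) :=
        lt_of_lt_of_le hA (Finset.inf'_le _ hk')
      have h3 := ciInf_le (Set.Finite.bddBelow
        (Set.finite_range fun i => g k (traj F ξ u w k) (u k) i - c i)) i
      have := lt_of_lt_of_le h2 h3
      linarith
    · intro i
      have h3 := ciInf_le (Set.Finite.bddBelow
        (Set.finite_range fun i => θ (traj F ξ u w (N + 1)) i - c i)) i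
      have := lt_of_lt_of_le hB h3
      linarith
  have main : ∀ d : Fin m → ℝ, (∀ i, |d i - c i| ≤ Wv / 2) →
      d ∈ SST N F Ω g θ ξ := by
    intro d hd
    refine ⟨u, fun w hw => ?_⟩
    obtain ⟨h1, h2⟩ := key w hw
    have hdc : ∀ i, d i ≤ c i + Wv / 2 := fun i => by
      have := abs_le.1 (hd i); linarith [this.2]
    exact ⟨fun k hk i => (hdc i).trans (h1 k hk i).le,
      fun i => (hdc i).trans (h2 i).le⟩
  refine ⟨main, ?_⟩
  have hball : Metric.ball c (Wv / 2) ⊆ SST N F Ω g θ ξ := by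
    intro d hd
    refine main d fun i => ?_
    have := dist_le_pi_dist d c i
    rw [Real.dist_eq] at this
    exact this.trans (le_of_lt (by simpa [Metric.mem_ball] using hd))
  exact interior_mono hball (by
    rw [Metric.isOpen_ball.interior_eq]
    exact Metric.mem_ball_self (by linarith))
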